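/- arXiv:1908.06721 — 2 statements merged into one kernel-verified Lean document; each statement's English description precedes it below -/
import Mathlib

section
/- Let T be a bounded self-adjoint operator on ℓ²(ℕ;ℂ), let x ∈ ℓ²(ℕ;ℂ), let z ∈ ℂ \ σ(T), let f : ℕ → ℕ satisfy f(n) > n for all n, and suppose ‖(I − P_{f(n)}) T P_n‖ → 0 as n → ∞. If (y_n)_{n∈ℕ} is any sequence in ℓ²(ℕ;ℂ) such that P_n y_n = y_n and, for each n, ‖P_{f(n)}(T − zI)y_n − x‖ ≤ ‖P_{f(n)}(T − zI)w − x‖ for every w with P_n w = w (i.e. y_n is a least-squares solution of the rectangular truncated system), then y_n converges in norm to R(z,T)x as n → ∞. -/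
open MeasureTheory Filter Topology

noncomputable section

/-- The Hilbert space `ℓ²(ℕ;ℂ)` of square-summable complex sequences. -/
abbrev ℓ2 : Type := lp (fun _ : ℕ => ℂ) 2

/-- The canonical basis vectors `e_j`. -/
def eVec (j : ℕ) : ℓ2 := lp.single 2 j 1

/-- The span of the first `n` canonical basis vectors. -/
def spanFirst (n : ℕ) : Submodule ℂ ℓ2 := Submodule.span ℂ (eVec '' Set.Iio n)

instance (n : ℕ) : FiniteDimensional ℂ (spanFirst n) :=
  FiniteDimensional.span_of_finite ℂ ((Set.finite_Iio n).image eVec)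

/-- `Pn n` is the orthogonal projection onto the span of the first `n` basis vectors. -/
def Pn (n : ℕ) : ℓ2 →L[ℂ] ℓ2 :=
  (spanFirst n).subtypeL.comp (Submodule.orthogonalProjection (spanFirst n))

lemma spanFirst_mono {n m : ℕ} (h : n ≤ m) : spanFirst n ≤ spanFirst m :=
  Submodule.span_mono (Set.image_mono (Set.Iio_subset_Iio h))

lemma Pn_mem (n : ℕ) (v : ℓ2) : Pn n v ∈ spanFirst n :=
  (Submodule.orthogonalProjection (spanFirst n) v).2

lemma Pn_eq_self {n : ℕ} {v : ℓ2} (hv : v ∈ spanFirst n) : Pn n v = v :=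
  Submodule.starProjection_eq_self_iff.mpr hv

lemma Pn_norm_le (n : ℕ) (v : ℓ2) : ‖Pn n v‖ ≤ ‖v‖ := by
  have := Submodule.orthogonalProjectionOnto_norm_le (spanFirst n)
  calc ‖Pn n v‖ = ‖Submodule.orthogonalProjection (spanFirst n) v‖ := rfl
    _ ≤ ‖Submodule.orthogonalProjection (spanFirst n)‖ * ‖v‖ :=
        (Submodule.orthogonalProjection (spanFirst n)).le_opNorm v
    _ ≤ 1 * ‖v‖ := by gcongr
    _ = ‖v‖ := one_mul _

lemma Pn_min {n : ℕ} (v : ℓ2) {w : ℓ2} (hw : w ∈ spanFirst n) :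
    ‖v - Pn n v‖ ≤ ‖v - w‖ := by
  have h := Submodule.starProjection_minimal (U := spanFirst n) v
  have : ‖v - Pn n v‖ = ⨅ x : spanFirst n, ‖v - x‖ := h
  rw [this]
  exact ciInf_le ⟨0, by rintro r ⟨x, rfl⟩; positivity⟩ (⟨w, hw⟩ : spanFirst n)

lemma partialSum_mem (n : ℕ) (v : ℓ2) :
    (∑ i ∈ Finset.range n, lp.single 2 i (v i)) ∈ spanFirst n := by
  refine Submodule.sum_mem _ fun i hi => ?_
  have : lp.single 2 i (v i) = v i • eVec i := by
    rw [eVec, ← lp.single_smul, smul_eq_mul, mul_one]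
  rw [this]
  exact Submodule.smul_mem _ _ (Submodule.subset_span ⟨i, Finset.mem_range.mp hi, rfl⟩)

lemma Pn_tendsto (v : ℓ2) : Tendsto (fun n => Pn n v) atTop (𝓝 v) := by
  have hsum : HasSum (fun i : ℕ => lp.single 2 i (v i)) v :=
    lp.hasSum_single (by norm_num) v
  have h := hsum.tendsto_sum_nat
  rw [tendsto_iff_norm_sub_tendsto_zero] at h ⊢
  refine squeeze_zero (fun n => by positivity) (fun n => ?_) (by simpa [norm_sub_rev] using h)
  rw [norm_sub_rev]
  exact Pn_min v (partialSum_mem n v)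

set_option maxHeartbeats 1000000 in
theorem stmt1 (T : ℓ2 →L[ℂ] ℓ2) (hT : IsSelfAdjoint T) (x : ℓ2)
    (z : ℂ) (hz : z ∉ spectrum ℂ T)
    (f : ℕ → ℕ) (hf : ∀ n, n < f n)
    (hcol : Tendsto (fun n => ‖((1 : ℓ2 →L[ℂ] ℓ2) - Pn (f n)).comp (T.comp (Pn n))‖)
      atTop (𝓝 0))
    (y : ℕ → ℓ2) (hy : ∀ n, Pn n (y n) = y n)
    (hls : ∀ n, ∀ w : ℓ2, Pn n w = w →
      ‖Pn (f n) ((T - z • (1 : ℓ2 →L[ℂ] ℓ2)) (y n)) - x‖ ≤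
        ‖Pn (f n) ((T - z • (1 : ℓ2 →L[ℂ] ℓ2)) w) - x‖) :
    Tendsto y atTop (𝓝 (Ring.inverse (T - z • (1 : ℓ2 →L[ℂ] ℓ2)) x)) := by
  set A : ℓ2 →L[ℂ] ℓ2 := T - z • (1 : ℓ2 →L[ℂ] ℓ2) with hAdef
  have hA : IsUnit A := by
    have h1 : IsUnit (algebraMap ℂ (ℓ2 →L[ℂ] ℓ2) z - T) := spectrum.notMem_iff.mp hz
    have : A = -(algebraMap ℂ (ℓ2 →L[ℂ] ℓ2) z - T) := by
      rw [Algebra.algebraMap_eq_smul_one, neg_sub]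
    rw [this]; exact h1.neg
  set B : ℓ2 →L[ℂ] ℓ2 := Ring.inverse A with hBdef
  set u : ℓ2 := B x with hudef
  have hAB : A.comp B = 1 := by
    show A * B = 1
    exact Ring.mul_inverse_cancel A hA
  have hBA : B.comp A = 1 := by
    show B * A = 1
    exact Ring.inverse_mul_cancel A hA
  have hAu : A u = x := by
    have := congrArg (fun S : ℓ2 →L[ℂ] ℓ2 => S x) hAB
    simpa using this
  -- ε n
  set ε : ℕ → ℝ := fun n => ‖((1 : ℓ2 →L[ℂ] ℓ2) - Pn (f n)).comp (T.comp (Pn n))‖ with hε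
  set c : ℕ → ℝ := fun n => ‖Pn (f n) (A (y n)) - x‖ with hc
  have hftend : Tendsto f atTop atTop :=
    tendsto_atTop_mono (fun n => (hf n).le) tendsto_id
  -- c tends to 0
  have hc0 : Tendsto c atTop (𝓝 0) := by
    have hbound : ∀ n, c n ≤ ‖A‖ * ‖Pn n u - u‖ + ‖Pn (f n) x - x‖ := by
      intro n
      have hw : Pn n (Pn n u) = Pn n u := Pn_eq_self (Pn_mem n u)
      have h1 : c n ≤ ‖Pn (f n) (A (Pn n u)) - x‖ := hls n (Pn n u) hw
      have h2 : Pn (f n) (A (Pn n u)) - x =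
          Pn (f n) (A (Pn n u) - A u) + (Pn (f n) x - x) := by
        rw [map_sub, hAu]; abel
      calc c n ≤ ‖Pn (f n) (A (Pn n u)) - x‖ := h1
        _ ≤ ‖Pn (f n) (A (Pn n u) - A u)‖ + ‖Pn (f n) x - x‖ := by
            rw [h2]; exact norm_add_le _ _
        _ ≤ ‖A (Pn n u) - A u‖ + ‖Pn (f n) x - x‖ := by
            gcongr; exact Pn_norm_le _ _
        _ ≤ ‖A‖ * ‖Pn n u - u‖ + ‖Pn (f n) x - x‖ := by
            gcongr
            rw [← map_sub]
            exact A.le_opNorm _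
    have hT1 : Tendsto (fun n => ‖Pn n u - u‖) atTop (𝓝 0) := by
      rw [← tendsto_iff_norm_sub_tendsto_zero]; exact Pn_tendsto u
    have hT2 : Tendsto (fun n => ‖Pn (f n) x - x‖) atTop (𝓝 0) := by
      have : Tendsto (fun m => ‖Pn m x - x‖) atTop (𝓝 0) := by
        rw [← tendsto_iff_norm_sub_tendsto_zero]; exact Pn_tendsto x
      exact this.comp hftend
    have : Tendsto (fun n => ‖A‖ * ‖Pn n u - u‖ + ‖Pn (f n) x - x‖) atTop (𝓝 0) := by
      have h := (hT1.const_mul ‖A‖).add hT2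
      simp only [mul_zero, add_zero] at h
      exact h
    exact squeeze_zero (fun n => norm_nonneg _) hbound this
  -- step 2: ‖A (y n) - x‖ ≤ c n + ε n * ‖y n‖
  have hstep2 : ∀ n, ‖A (y n) - x‖ ≤ c n + ε n * ‖y n‖ := by
    intro n
    have hyn : Pn (f n) (y n) = y n :=
      Pn_eq_self (spanFirst_mono (hf n).le (by rw [← hy n]; exact Pn_mem n (y n)))
    have hkey : A (y n) - Pn (f n) (A (y n)) =
        (((1 : ℓ2 →L[ℂ] ℓ2) - Pn (f n)).comp (T.comp (Pn n))) (y n) := by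
      simp only [ContinuousLinearMap.comp_apply, ContinuousLinearMap.sub_apply,
        ContinuousLinearMap.one_apply, hy n]
      have : A (y n) = T (y n) - z • y n := by
        simp [hAdef, ContinuousLinearMap.sub_apply, ContinuousLinearMap.smul_apply]
      rw [this, map_sub, _root_.map_smul, hyn]
      abel
    calc ‖A (y n) - x‖ = ‖(Pn (f n) (A (y n)) - x) + (A (y n) - Pn (f n) (A (y n)))‖ := by
          congr 1; abel
      _ ≤ ‖Pn (f n) (A (y n)) - x‖ + ‖A (y n) - Pn (f n) (A (y n))‖ := norm_add_le _ _
      _ ≤ c n + ε n * ‖y n‖ := by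
          rw [hkey]
          exact add_le_add le_rfl (ContinuousLinearMap.le_opNorm _ _)
  -- step 3
  have hstep3 : ∀ n, ‖y n - u‖ ≤ ‖B‖ * c n + ‖B‖ * ε n * (‖u‖ + ‖y n - u‖) := by
    intro n
    have hyu : y n - u = B (A (y n) - x) := by
      rw [map_sub]
      have : B (A (y n)) = y n := by
        have := congrArg (fun S : ℓ2 →L[ℂ] ℓ2 => S (y n)) hBA
        simpa using this
      rw [this, hudef]
    calc ‖y n - u‖ = ‖B (A (y n) - x)‖ := by rw [hyu]
      _ ≤ ‖B‖ * ‖A (y n) - x‖ := B.le_opNorm _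
      _ ≤ ‖B‖ * (c n + ε n * ‖y n‖) := by gcongr; exact hstep2 n
      _ ≤ ‖B‖ * (c n + ε n * (‖u‖ + ‖y n - u‖)) := by
          gcongr
          calc ‖y n‖ = ‖u + (y n - u)‖ := by congr 1; abel
            _ ≤ ‖u‖ + ‖y n - u‖ := norm_add_le _ _
      _ = ‖B‖ * c n + ‖B‖ * ε n * (‖u‖ + ‖y n - u‖) := by ring
  -- conclude
  rw [tendsto_iff_norm_sub_tendsto_zero]
  have hε0 : Tendsto ε atTop (𝓝 0) := hcol
  have hsmall : ∀ᶠ n in atTop, ‖B‖ * ε n ≤ 1 / 2 := by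
    have : Tendsto (fun n => ‖B‖ * ε n) atTop (𝓝 0) := by
      have h := hε0.const_mul ‖B‖
      simp only [mul_zero] at h
      exact h
    exact this.eventually_le_const (by norm_num)
  have hfinal : ∀ᶠ n in atTop, ‖y n - u‖ ≤ 2 * (‖B‖ * c n + ‖B‖ * ε n * ‖u‖) := by
    filter_upwards [hsmall] with n hn
    have h3 := hstep3 n
    have hεn : 0 ≤ ε n := norm_nonneg _
    nlinarith [norm_nonneg (y n - u), norm_nonneg u, norm_nonneg B, norm_nonneg (c n)]
  have hrhs : Tendsto (fun n => 2 * (‖B‖ * c n + ‖B‖ * ε n * ‖u‖)) atTop (𝓝 0) := by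
    have h1 : Tendsto (fun n => ‖B‖ * c n) atTop (𝓝 0) := by
      have h := hc0.const_mul ‖B‖
      simp only [mul_zero] at h
      exact h
    have h2 : Tendsto (fun n => ‖B‖ * ε n * ‖u‖) atTop (𝓝 0) := by
      have h := (hε0.const_mul ‖B‖).mul_const ‖u‖
      simp only [mul_zero, zero_mul] at h
      exact h
    have h := (h1.add h2).const_mul 2
    simp only [add_zero, mul_zero] at h
    exact h
  exact squeeze_zero' (Eventually.of_forall fun n => norm_nonneg _) hfinal hrhs
end
end

section
/- Let μ be a finite positive Borel measure on ℝ with Lebesgue decomposition μ = ρ·dx + μ_s with respect to Lebesgue measure, where ρ ∈ L¹(ℝ) is the density of the absolutely continuous part μ_ac and μ_s is the singular part. Let a < b be reals, and for ε > 0 define υ_ε(u) = ∫_ℝ P_H(u − λ, ε) dμ(λ). Let (χ_k)_{k∈ℕ} be continuous functions ℝ → [0,1] with compact support such that χ_k ≤ χ_{k+1} pointwise and χ_k(t) → 1 for every t ∈ ℝ. Then for each k the limit L_k := lim_{ε→0⁺} ∫_a^b υ_ε(u)·χ_k(υ_ε(u)) du exists and equals ∫_a^b ρ(u)·χ_k(ρ(u))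 du, and lim_{k→∞} L_k = ∫_a^b ρ(u) du = μ_ac([a,b]). -/
open MeasureTheory Filter Topology

open Metric Set

noncomputable section

/-- The Poisson kernel for the upper half-plane. -/
def PoissonH (x y : ℝ) : ℝ := (1 / Real.pi) * y / (x ^ 2 + y ^ 2)

lemma poisson_eq {ε : ℝ} (hε : 0 < ε) (u : ℝ) :
    PoissonH u ε = (Real.pi * ε)⁻¹ * (1 + (u / ε) ^ 2)⁻¹ := by
  have hπ := Real.pi_pos
  unfold PoissonH
  have h1 : u ^ 2 + ε ^ 2 > 0 := by positivity
  field_simp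
  ring

lemma poisson_nonneg {ε : ℝ} (hε : 0 < ε) (u : ℝ) : 0 ≤ PoissonH u ε := by
  rw [poisson_eq hε]
  have hπ := Real.pi_pos
  positivity

lemma poisson_cont {ε : ℝ} (hε : 0 < ε) (x : ℝ) :
    Continuous fun l => PoissonH (x - l) ε := by
  unfold PoissonH
  apply Continuous.div
  · continuity
  · continuity
  · intro l
    have : (x - l) ^ 2 + ε ^ 2 > 0 := by positivity
    exact ne_of_gt this

lemma poisson_integrable {ε : ℝ} (hε : 0 < ε) : Integrable (fun u => PoissonH u ε) := by
  have : Integrable (fun u : ℝ => (Real.pi * ε)⁻¹ * (1 + (u / ε) ^ 2)⁻¹) := by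
    apply Integrable.const_mul
    have h : Integrable (fun u : ℝ => (1 + u ^ 2)⁻¹) := integrable_inv_one_add_sq
    have := (integrable_comp_smul_iff (volume : Measure ℝ)
      (fun u : ℝ => (1 + u ^ 2)⁻¹) (R := ε⁻¹) (by positivity)).mpr h
    simpa [smul_eq_mul, div_eq_inv_mul] using this
  exact this.congr (by
    filter_upwards with u
    exact (poisson_eq hε u).symm)

lemma poisson_integral_one {ε : ℝ} (hε : 0 < ε) : ∫ u, PoissonH u ε = 1 := by
  have hπ := Real.pi_pos
  have h1 : ∫ u : ℝ, PoissonH u ε = ∫ u : ℝ, (Real.pi * ε)⁻¹ * (1 + (u / ε) ^ 2)⁻¹ := by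
    congr 1; ext u; exact poisson_eq hε u
  rw [h1, MeasureTheory.integral_const_mul]
  have h2 : (∫ u : ℝ, (1 + (u / ε) ^ 2)⁻¹) = |ε| • ∫ u : ℝ, (1 + u ^ 2)⁻¹ :=
    Measure.integral_comp_div (fun u : ℝ => (1 + u ^ 2)⁻¹) ε
  rw [h2, integral_univ_inv_one_add_sq, abs_of_pos hε, smul_eq_mul]
  field_simp

lemma poisson_le_max {ε : ℝ} (hε : 0 < ε) (u : ℝ) : PoissonH u ε ≤ (Real.pi * ε)⁻¹ := by
  rw [poisson_eq hε]
  have hπ := Real.pi_pos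
  have h1 : (1:ℝ) ≤ 1 + (u / ε) ^ 2 := by nlinarith [sq_nonneg (u/ε)]
  have h2 : (1 + (u / ε) ^ 2)⁻¹ ≤ 1 := by
    rw [inv_le_one_iff₀]; right; exact h1
  calc (Real.pi * ε)⁻¹ * (1 + (u / ε) ^ 2)⁻¹ ≤ (Real.pi * ε)⁻¹ * 1 := by
        apply mul_le_mul_of_nonneg_left h2 (by positivity)
    _ = (Real.pi * ε)⁻¹ := mul_one _

lemma superlevel_eq {ε : ℝ} (hε : 0 < ε) (x t : ℝ) (ht : 0 < t)
    (htT : t ≤ (Real.pi * ε)⁻¹) :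
    {l : ℝ | t ≤ PoissonH (x - l) ε}
      = closedBall x (Real.sqrt (ε / (Real.pi * t) - ε ^ 2)) := by
  have hπ := Real.pi_pos
  ext l
  simp only [mem_setOf_eq, mem_closedBall, Real.dist_eq]
  have hden : (0:ℝ) < (x - l) ^ 2 + ε ^ 2 := by positivity
  have hD : 0 ≤ ε / (Real.pi * t) - ε ^ 2 := by
    have : ε ^ 2 ≤ ε / (Real.pi * t) := by
      rw [le_div_iff₀ (by positivity)]
      calc ε ^ 2 * (Real.pi * t) ≤ ε ^ 2 * (Real.pi * (Real.pi * ε)⁻¹) := by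
            apply mul_le_mul_of_nonneg_left _ (by positivity)
            exact mul_le_mul_of_nonneg_left htT (le_of_lt hπ)
        _ = ε := by field_simp
    linarith
  constructor
  · intro h
    have h' : t * ((x - l) ^ 2 + ε ^ 2) ≤ (1/Real.pi) * ε := by
      calc t * ((x - l) ^ 2 + ε ^ 2) ≤ PoissonH (x-l) ε * ((x - l) ^ 2 + ε ^ 2) := by
            apply mul_le_mul_of_nonneg_right h (le_of_lt hden)
        _ = (1/Real.pi) * ε := by unfold PoissonH; field_simp
    have h2 : (x - l) ^ 2 ≤ ε / (Real.pi * t) - ε ^ 2 := by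
      rw [le_sub_iff_add_le, le_div_iff₀ (by positivity)]
      calc ((x - l) ^ 2 + ε ^ 2) * (Real.pi * t) = (t * ((x - l) ^ 2 + ε ^ 2)) * Real.pi := by ring
        _ ≤ ((1/Real.pi) * ε) * Real.pi := by
            apply mul_le_mul_of_nonneg_right h' (le_of_lt hπ)
        _ = ε := by field_simp
    calc |l - x| = Real.sqrt ((l - x) ^ 2) := (Real.sqrt_sq_eq_abs _).symm
      _ ≤ Real.sqrt (ε / (Real.pi * t) - ε ^ 2) := by
          apply Real.sqrt_le_sqrt; rw [show (l-x)^2 = (x-l)^2 by ring]; exact h2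
  · intro h
    have h2 : (x - l) ^ 2 ≤ ε / (Real.pi * t) - ε ^ 2 := by
      have hs := Real.sq_sqrt hD
      have habs : |x - l| = |l - x| := abs_sub_comm x l
      nlinarith [abs_nonneg (l - x), sq_abs (x - l), h]
    have h3 : t * ((x - l) ^ 2 + ε ^ 2) ≤ ε / Real.pi := by
      have : (x - l) ^ 2 + ε ^ 2 ≤ ε / (Real.pi * t) := by linarith
      calc t * ((x - l) ^ 2 + ε ^ 2) ≤ t * (ε / (Real.pi * t)) := by
            apply mul_le_mul_of_nonneg_left this (le_of_lt ht)
        _ = ε / Real.pi := by field_simp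
    rw [show PoissonH (x - l) ε = (1/Real.pi) * ε / ((x-l)^2 + ε^2) from rfl, le_div_iff₀ hden]
    calc t * ((x - l) ^ 2 + ε ^ 2) ≤ ε / Real.pi := h3
      _ = 1 / Real.pi * ε := by ring
  
lemma superlevel_empty {ε : ℝ} (hε : 0 < ε) (x t : ℝ) (htT : (Real.pi * ε)⁻¹ < t) :
    {l : ℝ | t ≤ PoissonH (x - l) ε} = ∅ := by
  ext l
  simp only [mem_setOf_eq, mem_empty_iff_false, iff_false, not_le]
  exact lt_of_le_of_lt (poisson_le_max hε _) htT

lemma layer_cake_poisson (μ : Measure ℝ) (x : ℝ) {ε : ℝ} (hε : 0 < ε) :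
    ∫⁻ l, ENNReal.ofReal (PoissonH (x - l) ε) ∂μ
      = ∫⁻ t in Ioi 0, μ {l : ℝ | t ≤ PoissonH (x - l) ε} :=
  lintegral_eq_lintegral_meas_le μ
    (Eventually.of_forall fun l => poisson_nonneg hε _)
    ((poisson_cont hε x).measurable.aemeasurable)

lemma layer_volume (x : ℝ) {ε : ℝ} (hε : 0 < ε) :
    ∫⁻ t in Ioi 0, volume {l : ℝ | t ≤ PoissonH (x - l) ε} = 1 := by
  rw [← layer_cake_poisson volume x hε]
  rw [← ofReal_integral_eq_lintegral_ofReal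
    ((poisson_integrable hε).comp_sub_left x)
    (Eventually.of_forall fun l => poisson_nonneg hε _)]
  rw [integral_sub_left_eq_self (fun u => PoissonH u ε) volume x, poisson_integral_one hε]
  exact ENNReal.ofReal_one

lemma poisson_lintegral_bounds (μ : Measure ℝ) [IsFiniteMeasure μ] (x c d r₀ ε : ℝ)
    (hc : 0 ≤ c) (hd : 0 < d) (hr : 0 < r₀) (hε : 0 < ε)
    (hup : ∀ r ∈ Ioc (0:ℝ) r₀,
      μ (closedBall x r) ≤ (ENNReal.ofReal c + ENNReal.ofReal d) * ENNReal.ofReal (2*r))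
    (hlo : ∀ r ∈ Ioc (0:ℝ) r₀,
      (ENNReal.ofReal c - ENNReal.ofReal d) * ENNReal.ofReal (2*r) ≤ μ (closedBall x r)) :
    ∫⁻ l, ENNReal.ofReal (PoissonH (x - l) ε) ∂μ
        ≤ μ Set.univ * ENNReal.ofReal (PoissonH r₀ ε)
          + (ENNReal.ofReal c + ENNReal.ofReal d) ∧
    (ENNReal.ofReal c - ENNReal.ofReal d)
        * (1 - ENNReal.ofReal (4*ε/(Real.pi*r₀)))
      ≤ ∫⁻ l, ENNReal.ofReal (PoissonH (x - l) ε) ∂μ := by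
  have hπ := Real.pi_pos
  set T : ℝ := (Real.pi * ε)⁻¹ with hT
  set t₀ : ℝ := PoissonH r₀ ε with ht₀def
  have ht₀eq : t₀ = 1 / Real.pi * ε / (r₀ ^ 2 + ε ^ 2) := rfl
  have ht₀ : 0 < t₀ := by rw [ht₀eq]; positivity
  have ht₀T : t₀ < T := by
    have e1 : t₀ = ε / (Real.pi * (r₀ ^ 2 + ε ^ 2)) := by rw [ht₀eq]; field_simp
    have e2 : T = 1 / (Real.pi * ε) := by rw [hT, one_div]
    rw [e1, e2, div_lt_div_iff₀ (by positivity) (by positivity)]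
    nlinarith [mul_pos hπ (mul_pos hr hr)]
  set S : ℝ → Set ℝ := fun t => {l : ℝ | t ≤ PoissonH (x - l) ε} with hS
  set C := ENNReal.ofReal c
  set D := ENNReal.ofReal d
  -- ae fact : t ≠ T
  have haeT : ∀ᵐ t : ℝ, t ≠ T := by
    have h0 : (volume : Measure ℝ) {T} = 0 := Real.volume_singleton
    rw [ae_iff]
    simpa [not_not, Set.setOf_eq_eq_singleton] using h0
  -- superlevel sets for t in (t₀, T)
  have hmid : ∀ t : ℝ, t₀ < t → t < T →
      S t = closedBall x (Real.sqrt (ε / (Real.pi * t) - ε ^ 2))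
        ∧ Real.sqrt (ε / (Real.pi * t) - ε ^ 2) ∈ Ioc (0:ℝ) r₀ := by
    intro t h1 h2
    have ht : 0 < t := lt_trans ht₀ h1
    refine ⟨superlevel_eq hε x t ht h2.le, ?_, ?_⟩
    · apply Real.sqrt_pos.mpr
      have : ε / (Real.pi * t) > ε ^ 2 := by
        rw [gt_iff_lt, lt_div_iff₀ (by positivity)]
        have h2' : t * (Real.pi * ε) < 1 := by
          rw [hT] at h2
          rw [← lt_div_iff₀ (by positivity)]
          simpa [one_div] using h2
        nlinarith [mul_pos ht (mul_pos hπ hε)]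
      linarith
    · have hle : ε / (Real.pi * t) - ε ^ 2 ≤ r₀ ^ 2 := by
        have : ε / (Real.pi * t) < r₀ ^ 2 + ε ^ 2 := by
          rw [div_lt_iff₀ (by positivity)]
          rw [ht₀eq] at h1
          rw [div_lt_iff₀ (by positivity)] at h1
          have h1' : ε < Real.pi * (t * (r₀ ^ 2 + ε ^ 2)) := by
            have h2' := mul_lt_mul_of_pos_left h1 hπ
            calc ε = Real.pi * (1 / Real.pi * ε) := by field_simp
              _ < _ := h2'
          nlinarith [h1']
        linarith
      calc Real.sqrt (ε / (Real.pi * t) - ε ^ 2) ≤ Real.sqrt (r₀ ^ 2) :=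
            Real.sqrt_le_sqrt hle
        _ = r₀ := Real.sqrt_sq hr.le
  have hSmeas : ∀ t : ℝ, MeasurableSet (S t) :=
    fun t => measurableSet_le measurable_const (poisson_cont hε x).measurable
  -- split of integral domain
  have hsplit : ∀ ν : Measure ℝ,
      ∫⁻ t in Ioi 0, ν (S t) = (∫⁻ t in Ioc 0 t₀, ν (S t)) + ∫⁻ t in Ioi t₀, ν (S t) := by
    intro ν
    rw [← Ioc_union_Ioi_eq_Ioi ht₀.le, lintegral_union measurableSet_Ioi]
    exact Ioc_disjoint_Ioi le_rfl
  -- upper bound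
  have hup1 : ∫⁻ t in Ioc 0 t₀, μ (S t) ≤ μ Set.univ * ENNReal.ofReal t₀ := by
    calc ∫⁻ t in Ioc 0 t₀, μ (S t) ≤ ∫⁻ _ in Ioc 0 t₀, μ Set.univ :=
          lintegral_mono fun t => measure_mono (subset_univ _)
      _ = μ Set.univ * ENNReal.ofReal t₀ := by
          rw [setLIntegral_const, Real.volume_Ioc, sub_zero]
  have hup2 : ∫⁻ t in Ioi t₀, μ (S t) ≤ (C + D) * ∫⁻ t in Ioi t₀, volume (S t) := by
    rw [← lintegral_const_mul' _ _
      (ENNReal.add_ne_top.mpr ⟨ENNReal.ofReal_ne_top, ENNReal.ofReal_ne_top⟩)]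
    apply lintegral_mono_ae
    filter_upwards [ae_restrict_of_ae haeT, ae_restrict_mem measurableSet_Ioi] with t htT htmem
    rcases lt_or_gt_of_ne htT with hlt | hgt
    · obtain ⟨hSt, hmem⟩ := hmid t htmem hlt
      rw [hSt, Real.volume_closedBall]
      exact hup _ hmem
    · have hempty : S t = ∅ := superlevel_empty hε x t hgt
      rw [hempty]
      simp
  have hupper : ∫⁻ l, ENNReal.ofReal (PoissonH (x - l) ε) ∂μ
      ≤ μ Set.univ * ENNReal.ofReal t₀ + (C + D) := by
    rw [layer_cake_poisson μ x hε, hsplit μ]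
    refine add_le_add hup1 ?_
    calc ∫⁻ t in Ioi t₀, μ (S t) ≤ (C + D) * ∫⁻ t in Ioi t₀, volume (S t) := hup2
      _ ≤ (C + D) * ∫⁻ t in Ioi 0, volume (S t) := by
            gcongr
      _ = (C + D) * 1 := by rw [layer_volume x hε]
      _ = C + D := mul_one _
  refine ⟨hupper, ?_⟩
  -- lower bound
  have hBbound : ∫⁻ t in Ioc 0 t₀, volume (S t) ≤ ENNReal.ofReal (4*ε/(Real.pi*r₀)) := by
    set k : ℝ := 2 * Real.sqrt (ε / Real.pi) with hk
    have hknn : 0 ≤ k := by positivity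
    have step1 : ∫⁻ t in Ioc 0 t₀, volume (S t)
        ≤ ∫⁻ t in Ioc 0 t₀, ENNReal.ofReal (k * t ^ (-(1:ℝ)/2)) := by
      apply lintegral_mono_ae
      filter_upwards [ae_restrict_mem measurableSet_Ioc] with t htmem
      have ht : 0 < t := htmem.1
      have htT' : t < T := lt_of_le_of_lt htmem.2 ht₀T
      have hSt : S t = closedBall x (Real.sqrt (ε / (Real.pi * t) - ε ^ 2)) :=
        superlevel_eq hε x t ht htT'.le
      rw [hSt, Real.volume_closedBall]
      apply ENNReal.ofReal_le_ofReal
      have h1 : Real.sqrt (ε / (Real.pi * t) - ε ^ 2) ≤ Real.sqrt (ε / (Real.pi * t)) := by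
        apply Real.sqrt_le_sqrt
        nlinarith [sq_nonneg ε]
      have h2 : Real.sqrt (ε / (Real.pi * t)) = Real.sqrt (ε / Real.pi) * (Real.sqrt t)⁻¹ := by
        rw [← Real.sqrt_inv, ← Real.sqrt_mul (by positivity)]
        congr 1
        field_simp
      have h3 : t ^ (-(1:ℝ)/2) = (Real.sqrt t)⁻¹ := by
        rw [show (-(1:ℝ)/2) = -(1/2 : ℝ) by norm_num, Real.rpow_neg ht.le,
          ← Real.sqrt_eq_rpow]
      rw [h3, hk]
      calc 2 * Real.sqrt (ε / (Real.pi * t) - ε ^ 2)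
          ≤ 2 * Real.sqrt (ε / (Real.pi * t)) := by linarith [h1]
        _ = 2 * Real.sqrt (ε / Real.pi) * (Real.sqrt t)⁻¹ := by rw [h2]; ring
    have hint : IntegrableOn (fun t : ℝ => k * t ^ (-(1:ℝ)/2)) (Ioc 0 t₀) :=
      ((integrableOn_Ioc_iff_integrableOn_Ioo (f := fun t : ℝ => t ^ (-(1:ℝ)/2)) enorm_ne_top).mpr
        ((intervalIntegral.integrableOn_Ioo_rpow_iff ht₀).mpr (by norm_num))).const_mul k
    have hnn : 0 ≤ᵐ[volume.restrict (Ioc 0 t₀)] fun t : ℝ => k * t ^ (-(1:ℝ)/2) := by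
      filter_upwards [ae_restrict_mem measurableSet_Ioc] with t htmem
      have ht : 0 < t := htmem.1
      positivity
    have step2 : ∫⁻ t in Ioc 0 t₀, ENNReal.ofReal (k * t ^ (-(1:ℝ)/2))
        = ENNReal.ofReal (∫ t in Ioc 0 t₀, k * t ^ (-(1:ℝ)/2)) :=
      (ofReal_integral_eq_lintegral_ofReal hint hnn).symm
    have step3 : (∫ t in Ioc 0 t₀, k * t ^ (-(1:ℝ)/2)) = k * (2 * Real.sqrt t₀) := by
      rw [← intervalIntegral.integral_of_le ht₀.le]
      rw [intervalIntegral.integral_const_mul]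
      rw [integral_rpow (Or.inl (by norm_num))]
      rw [Real.zero_rpow (by norm_num)]
      norm_num
      left
      rw [← Real.sqrt_eq_rpow]
      ring
    have step4 : k * (2 * Real.sqrt t₀) ≤ 4*ε/(Real.pi*r₀) := by
      have e1 : t₀ = ε / (Real.pi * (r₀ ^ 2 + ε ^ 2)) := by rw [ht₀eq]; field_simp
      have ht₀le : ε / Real.pi * t₀ ≤ (ε/(Real.pi*r₀))^2 := by
        rw [e1]
        rw [div_mul_div_comm, div_pow, div_le_div_iff₀ (by positivity) (by positivity)]
        ring_nf
        nlinarith [sq_nonneg ε, sq_nonneg r₀, mul_pos hπ hπ, sq_nonneg (ε*r₀),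
          mul_pos (mul_pos hπ hπ) (mul_pos hε hε), mul_pos hε hε, mul_pos hr hr]
      calc k * (2 * Real.sqrt t₀) = 4 * Real.sqrt (ε / Real.pi * t₀) := by
            rw [hk, Real.sqrt_mul (by positivity)]; ring
        _ ≤ 4 * Real.sqrt ((ε/(Real.pi*r₀))^2) := by
            apply mul_le_mul_of_nonneg_left (Real.sqrt_le_sqrt ht₀le) (by norm_num)
        _ = 4 * (ε/(Real.pi*r₀)) := by rw [Real.sqrt_sq (by positivity)]
        _ = 4*ε/(Real.pi*r₀) := by ring
    calc ∫⁻ t in Ioc 0 t₀, volume (S t)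
        ≤ ∫⁻ t in Ioc 0 t₀, ENNReal.ofReal (k * t ^ (-(1:ℝ)/2)) := step1
      _ = ENNReal.ofReal (∫ t in Ioc 0 t₀, k * t ^ (-(1:ℝ)/2)) := step2
      _ ≤ ENNReal.ofReal (4*ε/(Real.pi*r₀)) := ENNReal.ofReal_le_ofReal (by rw [step3]; exact step4)
  have hB1 : ∫⁻ t in Ioc 0 t₀, volume (S t) ≤ 1 := by
    rw [← layer_volume x hε]
    exact lintegral_mono_set Ioc_subset_Ioi_self
  have hIciT : ∫⁻ t in Ici T, volume (S t) = 0 := by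
    have : ∀ᵐ t ∂(volume.restrict (Ici T)), volume (S t) = 0 := by
      filter_upwards [ae_restrict_of_ae haeT, ae_restrict_mem measurableSet_Ici] with t h1 h2
      have hempty : S t = ∅ := superlevel_empty hε x t (lt_of_le_of_ne h2 (Ne.symm h1))
      rw [hempty]
      simp
    calc ∫⁻ t in Ici T, volume (S t) = ∫⁻ _ in Ici T, 0 := lintegral_congr_ae this
      _ = 0 := lintegral_zero
  have hIoo : ∫⁻ t in Ioo t₀ T, volume (S t)
      = 1 - ∫⁻ t in Ioc 0 t₀, volume (S t) := by
    have h1 : (∫⁻ t in Ioo t₀ T, volume (S t)) + ∫⁻ t in Ioc 0 t₀, volume (S t) = 1 := by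
      have h2 : ∫⁻ t in Ioi t₀, volume (S t)
          = (∫⁻ t in Ioo t₀ T, volume (S t)) + ∫⁻ t in Ici T, volume (S t) := by
        rw [← Ioo_union_Ici_eq_Ioi ht₀T, lintegral_union measurableSet_Ici]
        exact disjoint_left.mpr fun t h h' => absurd h' (not_le.mpr h.2)
      have := layer_volume x hε
      rw [hsplit volume, h2, hIciT, add_zero] at this
      rw [add_comm] at this
      exact this
    exact ENNReal.eq_sub_of_add_eq (by exact ne_top_of_le_ne_top ENNReal.one_ne_top hB1) h1
  have hlo2 : (C - D) * ∫⁻ t in Ioo t₀ T, volume (S t) ≤ ∫⁻ t in Ioo t₀ T, μ (S t) := by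
    rw [← lintegral_const_mul' _ _ (ne_top_of_le_ne_top ENNReal.ofReal_ne_top tsub_le_self)]
    apply lintegral_mono_ae
    filter_upwards [ae_restrict_mem measurableSet_Ioo] with t htmem
    obtain ⟨hSt, hmem⟩ := hmid t htmem.1 htmem.2
    rw [hSt, Real.volume_closedBall]
    exact hlo _ hmem
  calc (C - D) * (1 - ENNReal.ofReal (4*ε/(Real.pi*r₀)))
      ≤ (C - D) * (1 - ∫⁻ t in Ioc 0 t₀, volume (S t)) := by
        gcongr
    _ = (C - D) * ∫⁻ t in Ioo t₀ T, volume (S t) := by rw [hIoo]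
    _ ≤ ∫⁻ t in Ioo t₀ T, μ (S t) := hlo2
    _ ≤ ∫⁻ t in Ioi 0, μ (S t) := lintegral_mono_set (fun t h => lt_trans ht₀ h.1)
    _ = ∫⁻ l, ENNReal.ofReal (PoissonH (x - l) ε) ∂μ := (layer_cake_poisson μ x hε).symm

lemma poisson_tendsto_of_ratio (μ : Measure ℝ) [IsFiniteMeasure μ] (x c : ℝ) (hc : 0 ≤ c)
    (h : Tendsto (fun r : ℝ => μ (closedBall x r) / volume (closedBall x r)) (𝓝[>] 0)
      (𝓝 (ENNReal.ofReal c))) :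
    Tendsto (fun ε : ℝ => ∫ l, PoissonH (x - l) ε ∂μ) (𝓝[>] 0) (𝓝 c) := by
  have hπ := Real.pi_pos
  rw [Metric.tendsto_nhds]
  intro η hη
  set d : ℝ := η / 5 with hdd
  have hd : 0 < d := by positivity
  -- find r₀ from the ratio hypothesis
  have hIcc := (ENNReal.tendsto_nhds (ENNReal.ofReal_ne_top (r := c))).mp h
    (ENNReal.ofReal d) (by simp [ENNReal.ofReal_pos, hd])
  rw [eventually_iff] at hIcc
  rw [mem_nhdsGT_iff_exists_Ioc_subset] at hIcc
  obtain ⟨r₀, hr₀, hsub⟩ := hIcc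
  rw [mem_Ioi] at hr₀
  have hball : ∀ r ∈ Ioc (0:ℝ) r₀,
      (μ (closedBall x r) ≤ (ENNReal.ofReal c + ENNReal.ofReal d) * ENNReal.ofReal (2*r)) ∧
      ((ENNReal.ofReal c - ENNReal.ofReal d) * ENNReal.ofReal (2*r) ≤ μ (closedBall x r)) := by
    intro r hr
    have hmem := hsub hr
    simp only [mem_setOf_eq, mem_Icc] at hmem
    have hv : volume (closedBall x r) = ENNReal.ofReal (2*r) := Real.volume_closedBall x r
    have hv0 : ENNReal.ofReal (2*r) ≠ 0 := by
      simp [ENNReal.ofReal_eq_zero]; linarith [hr.1]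
    constructor
    · have := hmem.2
      rw [hv] at this
      rw [ENNReal.div_le_iff_le_mul (Or.inl hv0) (Or.inl ENNReal.ofReal_ne_top)] at this
      exact this
    · have := hmem.1
      rw [hv] at this
      rw [ENNReal.le_div_iff_mul_le (Or.inl hv0) (Or.inl ENNReal.ofReal_ne_top)] at this
      exact this
  -- eventual smallness conditions
  have htend1 : Tendsto (fun ε : ℝ => (μ Set.univ).toReal * PoissonH r₀ ε) (𝓝[>] 0) (𝓝 0) := by
    have hcont : Continuous (fun ε : ℝ => (μ Set.univ).toReal * PoissonH r₀ ε) := by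
      unfold PoissonH
      apply Continuous.mul continuous_const
      apply Continuous.div (by continuity) (by continuity)
      intro y
      have : (0:ℝ) < r₀ ^ 2 + y ^ 2 := by positivity
      exact ne_of_gt this
    have := (hcont.tendsto 0).mono_left (nhdsWithin_le_nhds (s := Ioi (0:ℝ)))
    simpa [PoissonH] using this
  have htend2 : Tendsto (fun ε : ℝ => 4*ε/(Real.pi*r₀)) (𝓝[>] 0) (𝓝 0) := by
    have hcont : Continuous (fun ε : ℝ => 4*ε/(Real.pi*r₀)) := by
      apply Continuous.div_const; continuity
    have := (hcont.tendsto 0).mono_left (nhdsWithin_le_nhds (s := Ioi (0:ℝ)))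
    simpa using this
  have hmin : 0 < min 1 (d / (c+1)) := lt_min one_pos (by positivity)
  filter_upwards [self_mem_nhdsWithin,
    htend1.eventually (eventually_le_nhds hd),
    htend2.eventually (eventually_le_nhds hmin)] with ε hε h1 h2
  rw [mem_Ioi] at hε
  set bb : ℝ := 4*ε/(Real.pi*r₀) with hbb
  have hbb0 : 0 ≤ bb := by positivity
  obtain ⟨hupI, hloI⟩ := poisson_lintegral_bounds μ x c d r₀ ε hc hd hr₀ hε
    (fun r hr => (hball r hr).1) (fun r hr => (hball r hr).2)
  set I := ∫⁻ l, ENNReal.ofReal (PoissonH (x - l) ε) ∂μ with hI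
  have hRHSfin : μ Set.univ * ENNReal.ofReal (PoissonH r₀ ε)
      + (ENNReal.ofReal c + ENNReal.ofReal d) ≠ ⊤ :=
    ENNReal.add_ne_top.mpr ⟨ENNReal.mul_ne_top (measure_ne_top μ _) ENNReal.ofReal_ne_top,
      ENNReal.add_ne_top.mpr ⟨ENNReal.ofReal_ne_top, ENNReal.ofReal_ne_top⟩⟩
  have hIfin : I ≠ ⊤ := ne_top_of_le_ne_top hRHSfin hupI
  have hJ : (∫ l, PoissonH (x - l) ε ∂μ) = I.toReal := by
    rw [hI, integral_eq_lintegral_of_nonneg_ae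
      (Eventually.of_forall fun l => poisson_nonneg hε _)
      ((poisson_cont hε x).aestronglyMeasurable)]
  have hJup : (∫ l, PoissonH (x - l) ε ∂μ) ≤ (μ Set.univ).toReal * PoissonH r₀ ε + (c + d) := by
    rw [hJ]
    calc I.toReal ≤ (μ Set.univ * ENNReal.ofReal (PoissonH r₀ ε)
        + (ENNReal.ofReal c + ENNReal.ofReal d)).toReal := ENNReal.toReal_mono hRHSfin hupI
      _ = (μ Set.univ).toReal * PoissonH r₀ ε + (c + d) := by
          rw [ENNReal.toReal_add (ENNReal.mul_ne_top (measure_ne_top μ _) ENNReal.ofReal_ne_top)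
            (ENNReal.add_ne_top.mpr ⟨ENNReal.ofReal_ne_top, ENNReal.ofReal_ne_top⟩),
            ENNReal.toReal_mul,
            ENNReal.toReal_add ENNReal.ofReal_ne_top ENNReal.ofReal_ne_top,
            ENNReal.toReal_ofReal (poisson_nonneg hε r₀),
            ENNReal.toReal_ofReal hc, ENNReal.toReal_ofReal hd.le]
  have hJlo : max (c - d) 0 * max (1 - bb) 0 ≤ ∫ l, PoissonH (x - l) ε ∂μ := by
    rw [hJ]
    have hL : (ENNReal.ofReal c - ENNReal.ofReal d)
        * (1 - ENNReal.ofReal bb) = ENNReal.ofReal (c - d) * ENNReal.ofReal (1 - bb) := by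
      rw [← ENNReal.ofReal_sub c hd.le, ← ENNReal.ofReal_one, ← ENNReal.ofReal_sub 1 hbb0]
    have := ENNReal.toReal_mono hIfin hloI
    rw [hL, ENNReal.toReal_mul, ENNReal.toReal_ofReal', ENNReal.toReal_ofReal'] at this
    exact this
  have hJ0 : 0 ≤ ∫ l, PoissonH (x - l) ε ∂μ := by
    rw [hJ]; exact ENNReal.toReal_nonneg
  rw [Real.dist_eq, abs_sub_lt_iff]
  have hbb1 : bb ≤ 1 := le_trans h2 (min_le_left _ _)
  have hbb2 : bb ≤ d / (c+1) := le_trans h2 (min_le_right _ _)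
  constructor
  · -- J - c < η
    have : (∫ l, PoissonH (x - l) ε ∂μ) ≤ c + 2*d := by
      calc (∫ l, PoissonH (x - l) ε ∂μ) ≤ (μ Set.univ).toReal * PoissonH r₀ ε + (c + d) := hJup
        _ ≤ d + (c + d) := by linarith [h1]
        _ = c + 2*d := by ring
    linarith
  · -- c - J < η
    have hkey : c - 2*d ≤ ∫ l, PoissonH (x - l) ε ∂μ := by
      rcases le_or_gt c (2*d) with hcase | hcase
      · linarith [hJ0]
      · have hc1 : max (c - d) 0 = c - d := max_eq_left (by linarith)
        have hc2 : max (1 - bb) 0 = 1 - bb := max_eq_left (by linarith)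
        have hstep : c - 2*d ≤ (c - d) * (1 - bb) := by
          have hb : bb * (c - d) ≤ d := by
            calc bb * (c - d) ≤ (d / (c+1)) * (c - d) := by
                  apply mul_le_mul_of_nonneg_right hbb2 (by linarith)
              _ ≤ (d / (c+1)) * (c + 1) := by
                  apply mul_le_mul_of_nonneg_left (by linarith) (by positivity)
              _ = d := by field_simp
          nlinarith
        calc c - 2*d ≤ (c - d) * (1 - bb) := hstep
          _ = max (c - d) 0 * max (1 - bb) 0 := by rw [hc1, hc2]
          _ ≤ _ := hJlo
    linarith

lemma ae_poisson_tendsto (μ : Measure ℝ) [IsFiniteMeasure μ]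
    (ρ : ℝ → ℝ) (hρint : Integrable ρ) (hρ0 : ∀ x, 0 ≤ ρ x)
    (μs : Measure ℝ) (hsing : μs ⟂ₘ (volume : Measure ℝ))
    (hdecomp : μ = volume.withDensity (fun x => ENNReal.ofReal (ρ x)) + μs) :
    ∀ᵐ x, Tendsto (fun ε : ℝ => ∫ l, PoissonH (x - l) ε ∂μ) (𝓝[>] 0) (𝓝 (ρ x)) := by
  have hae : AEMeasurable (fun x => ENNReal.ofReal (ρ x)) volume :=
    ENNReal.measurable_ofReal.comp_aemeasurable hρint.aemeasurable
  set ν₁ : Measure ℝ := volume.withDensity (fun x => ENNReal.ofReal (ρ x)) with hν₁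
  have hν₁fin : IsFiniteMeasure ν₁ := by
    constructor
    rw [hν₁, withDensity_apply _ MeasurableSet.univ, setLIntegral_univ]
    exact (hasFiniteIntegral_iff_ofReal (Eventually.of_forall hρ0)).mp hρint.2
  have hμsfin : IsFiniteMeasure μs := by
    apply isFiniteMeasure_of_le μ
    rw [hdecomp]
    exact Measure.le_add_left (le_refl _)
  have hrn : μ.rnDeriv volume =ᵐ[volume] fun x => ENNReal.ofReal (ρ x) := by
    have h1 : μ.rnDeriv volume =ᵐ[volume] ν₁.rnDeriv volume + μs.rnDeriv volume := by
      rw [hdecomp]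
      exact Measure.rnDeriv_add ν₁ μs volume
    have h2 : ν₁.rnDeriv volume =ᵐ[volume] fun x => ENNReal.ofReal (ρ x) :=
      Measure.rnDeriv_withDensity₀ volume hae
    have h3 : μs.rnDeriv volume =ᵐ[volume] 0 :=
      Measure.MutuallySingular.rnDeriv_ae_eq_zero hsing
    filter_upwards [h1, h2, h3] with x hx1 hx2 hx3
    rw [hx1, Pi.add_apply, hx2, hx3, Pi.zero_apply, add_zero]
  have hBes := Besicovitch.ae_tendsto_rnDeriv μ volume
  filter_upwards [hBes, hrn] with x hx1 hx2
  apply poisson_tendsto_of_ratio μ x (ρ x) (hρ0 x)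
  rwa [hx2] at hx1

theorem stmt17 (μ : Measure ℝ) [IsFiniteMeasure μ]
    (ρ : ℝ → ℝ) (hρint : Integrable ρ) (hρ0 : ∀ x, 0 ≤ ρ x)
    (μs : Measure ℝ) (hsing : μs ⟂ₘ (volume : Measure ℝ))
    (hdecomp : μ = volume.withDensity (fun x => ENNReal.ofReal (ρ x)) + μs)
    (a b : ℝ) (hab : a < b)
    (χ : ℕ → ℝ → ℝ) (hχc : ∀ k, Continuous (χ k))
    (hχ01 : ∀ k t, χ k t ∈ Set.Icc (0 : ℝ) 1)
    (hχsupp : ∀ k, HasCompactSupport (χ k))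
    (hχmono : ∀ k t, χ k t ≤ χ (k + 1) t)
    (hχlim : ∀ t, Tendsto (fun k => χ k t) atTop (𝓝 1)) :
    (∀ k : ℕ,
      Tendsto
        (fun ε : ℝ =>
          ∫ x in a..b, (∫ l, PoissonH (x - l) ε ∂μ) * χ k (∫ l, PoissonH (x - l) ε ∂μ))
        (𝓝[>] 0) (𝓝 (∫ x in a..b, ρ x * χ k (ρ x)))) ∧
    Tendsto (fun k : ℕ => ∫ x in a..b, ρ x * χ k (ρ x)) atTop (𝓝 (∫ x in a..b, ρ x)) ∧
    (∫ x in a..b, ρ x) =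
      (volume.withDensity (fun x => ENNReal.ofReal (ρ x)) (Set.Icc a b)).toReal := by
  have hρae : AEStronglyMeasurable ρ (volume.restrict (Ioc a b)) :=
    hρint.aestronglyMeasurable.restrict
  refine ⟨?_, ?_, ?_⟩
  · -- part 1
    intro k
    -- the truncation function F t = t * χ k t is continuous with compact support
    set F : ℝ → ℝ := fun t => t * χ k t with hF
    have hFc : Continuous F := continuous_id.mul (hχc k)
    have hFsupp : HasCompactSupport F := (hχsupp k).mul_left
    obtain ⟨M, hM⟩ : ∃ M, ∀ t, |F t| ≤ M := by
      obtain ⟨M, hM⟩ := (hFc.abs).bounded_above_of_compact_support hFsupp.abs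
      exact ⟨M, fun t => by simpa using hM t⟩
    rw [intervalIntegral.integral_of_le hab.le]
    have : (fun ε : ℝ =>
          ∫ x in a..b, (∫ l, PoissonH (x - l) ε ∂μ) * χ k (∫ l, PoissonH (x - l) ε ∂μ))
        = fun ε : ℝ => ∫ x in Ioc a b, F (∫ l, PoissonH (x - l) ε ∂μ) := by
      funext ε
      rw [intervalIntegral.integral_of_le hab.le]
    rw [this]
    have hlimF : ∀ᵐ x ∂(volume.restrict (Ioc a b)),
        Tendsto (fun ε : ℝ => F (∫ l, PoissonH (x - l) ε ∂μ)) (𝓝[>] 0) (𝓝 (F (ρ x))) := by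
      filter_upwards [ae_restrict_of_ae
        (ae_poisson_tendsto μ ρ hρint hρ0 μs hsing hdecomp)] with x hx
      exact (hFc.tendsto (ρ x)).comp hx
    apply tendsto_integral_filter_of_dominated_convergence (bound := fun _ => M)
    · -- eventual measurability
      filter_upwards [self_mem_nhdsWithin] with ε hε
      rw [mem_Ioi] at hε
      have hcont : Continuous fun x => ∫ l, PoissonH (x - l) ε ∂μ := by
        apply continuous_of_dominated (bound := fun _ => (Real.pi * ε)⁻¹)
        · intro x; exact (poisson_cont hε x).aestronglyMeasurable
        · intro x
          filter_upwards with l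
          rw [Real.norm_eq_abs, abs_of_nonneg (poisson_nonneg hε _)]
          exact poisson_le_max hε _
        · exact integrable_const _
        · filter_upwards with l
          unfold PoissonH
          apply Continuous.div (by continuity) (by continuity)
          intro x
          have : (0:ℝ) < (x - l) ^ 2 + ε ^ 2 := by positivity
          exact ne_of_gt this
      exact (hFc.comp hcont).aestronglyMeasurable.restrict
    · filter_upwards [self_mem_nhdsWithin] with ε hε
      filter_upwards with x
      exact hM _
    · exact integrable_const _
    · exact hlimF
  · -- part 2
    rw [intervalIntegral.integral_of_le hab.le]
    have : (fun k : ℕ => ∫ x in a..b, ρ x * χ k (ρ x))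
        = fun k : ℕ => ∫ x in Ioc a b, ρ x * χ k (ρ x) := by
      funext k; rw [intervalIntegral.integral_of_le hab.le]
    rw [this]
    apply tendsto_integral_filter_of_dominated_convergence (bound := fun x => |ρ x|)
    · filter_upwards with k
      exact hρae.mul ((hχc k).comp_aestronglyMeasurable hρae)
    · filter_upwards with k
      filter_upwards with x
      rw [Real.norm_eq_abs, abs_mul]
      calc |ρ x| * |χ k (ρ x)| ≤ |ρ x| * 1 := by
            apply mul_le_mul_of_nonneg_left _ (abs_nonneg _)
            rw [abs_le]
            exact ⟨by linarith [(hχ01 k (ρ x)).1], (hχ01 k (ρ x)).2⟩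
        _ = |ρ x| := mul_one _
    · exact hρint.abs.integrableOn
    · filter_upwards with x
      have := (hχlim (ρ x)).const_mul (ρ x)
      simpa using this
  · -- part 3
    rw [withDensity_apply _ measurableSet_Icc]
    have h1 : ∫⁻ x in Icc a b, ENNReal.ofReal (ρ x) = ∫⁻ x in Ioc a b, ENNReal.ofReal (ρ x) := by
      exact setLIntegral_congr Ioc_ae_eq_Icc.symm
    rw [h1, intervalIntegral.integral_of_le hab.le,
      ← ofReal_integral_eq_lintegral_ofReal hρint.integrableOn
        (ae_restrict_of_ae (Eventually.of_forall hρ0)),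
      ENNReal.toReal_ofReal]
    exact integral_nonneg fun x => hρ0 x
end
end
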